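/- arXiv:2102.09587 — 3 statements merged into one kernel-verified Lean document; each statement's English description precedes it below -/
import Mathlib

section
/- Let G and G_p be simple graphs on a common finite vertex set, neither having isolated vertices, with normalized Laplacians L and L_p and error matrix E = L_p − L. Let u be a vertex with α_u ∈ [0,1). Then the ℓ1 norm of row u of E satisfies ‖E_u‖₁ ≤ Δ_u⁻/√(d_u δ_u) + Δ_u⁺/√(d_u' δ_u') + (α_u/(1−α_u)) · (d_u − Δ_u⁻)/√(d_u δ_u). -/
/-- The normalized Laplacian of a simple graph. -/
noncomputable def normLap {V : Type*} [Fintype V] [DecidableEq V]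
    (G : SimpleGraph V) [DecidableRel G.Adj] : Matrix V V ℝ :=
  fun u v =>
    if u = v then 1
    else if G.Adj u v then -(1 / Real.sqrt ((G.degree u : ℝ) * (G.degree v : ℝ)))
    else 0

/-- `α_u`: the maximum relative change in degree among `u` and its neighbours in `G`. -/
noncomputable def alphaU {V : Type*} [Fintype V] [DecidableEq V]
    (G Gp : SimpleGraph V) [DecidableRel G.Adj] [DecidableRel Gp.Adj] (u : V) : ℝ :=
  (insert u (G.neighborFinset u)).sup' (Finset.insert_nonempty _ _)
    (fun v => |(Gp.degree v : ℝ) - (G.degree v : ℝ)| / (G.degree v : ℝ))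

/-!
Row `u` of `E` vanishes off the neighbourhoods of `u` in `G` and `G_p`. At a deleted or an
added edge `uv` the entry is `±1/√(d_u d_v)`, computed in the graph containing the edge, hence
at most `1/√(d_u δ_u)` in absolute value (primed for added edges). At a retained edge the entry is
`1/s - 1/t` with `s = √(d_u d_v)` and `t = √(d_u' d_v')`; since both degrees change by a factor
in `[1 - α_u, 1 + α_u]`, so does `t/s`, whence `|1/s - 1/t| ≤ α_u/((1 - α_u) s)`. There are
`d_u - Δ_u⁻` retained edges.
-/

open Finset

lemma abs_one_div_sub_one_div_le {α s t : ℝ} (hs : 0 < s) (hα0 : 0 ≤ α) (hα1 : α < 1)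
    (hts : |t - s| ≤ α * s) : |1 / s - 1 / t| ≤ α / (1 - α) * (1 / s) := by
  have hα : 0 < 1 - α := by linarith
  have hst : (1 - α) * s ≤ t := by linarith [(abs_sub_le_iff.mp hts).2]
  have ht : 0 < t := (mul_pos hα hs).trans_le hst
  rw [div_sub_div _ _ hs.ne' ht.ne', one_mul, mul_one, abs_div, abs_of_pos (mul_pos hs ht)]
  calc |t - s| / (s * t) ≤ α * s / (s * ((1 - α) * s)) :=
        div_le_div₀ (by positivity) hts (by positivity) (mul_le_mul_of_nonneg_left hst hs.le)
    _ = α / (1 - α) * (1 / s) := by field_simp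

lemma abs_sqrt_mul_sub_sqrt_mul_le {α a b a' b' : ℝ} (hα0 : 0 ≤ α) (hα1 : α ≤ 1)
    (ha : 0 ≤ a) (hb : 0 ≤ b) (ha' : |a' - a| ≤ α * a) (hb' : |b' - b| ≤ α * b) :
    |√(a' * b') - √(a * b)| ≤ α * √(a * b) := by
  obtain ⟨ha₁, ha₂⟩ := abs_sub_le_iff.mp ha'
  obtain ⟨hb₁, hb₂⟩ := abs_sub_le_iff.mp hb'
  have hlower : (1 - α) ^ 2 * (a * b) ≤ a' * b' := by
    rw [show (1 - α) ^ 2 * (a * b) = ((1 - α) * a) * ((1 - α) * b) by ring]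
    exact mul_le_mul (by linarith) (by linarith) (by nlinarith) (by nlinarith)
  have hupper : a' * b' ≤ (1 + α) ^ 2 * (a * b) := by
    rw [show (1 + α) ^ 2 * (a * b) = ((1 + α) * a) * ((1 + α) * b) by ring]
    exact mul_le_mul (by linarith) (by linarith) (by nlinarith) (by nlinarith)
  have hsqrt {c : ℝ} (hc : 0 ≤ c) : √(c ^ 2 * (a * b)) = c * √(a * b) := by
    rw [Real.sqrt_mul (sq_nonneg c), Real.sqrt_sq hc]
  have h₁ := Real.sqrt_le_sqrt hlower
  have h₂ := Real.sqrt_le_sqrt hupper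
  rw [hsqrt (by linarith)] at h₁ h₂
  rw [abs_sub_le_iff]
  constructor <;> linarith

section Graph

variable {V : Type*} [Fintype V] {G Gp : SimpleGraph V}
  [DecidableRel G.Adj] [DecidableRel Gp.Adj] {u v : V}

lemma one_div_sqrt_degree_mul_le_of_adj (hu : (G.neighborFinset u).Nonempty) (h : G.Adj u v) :
    1 / √((G.degree u : ℝ) * G.degree v) ≤
      1 / √((G.degree u : ℝ) * (G.neighborFinset u).inf' hu (fun w => (G.degree w : ℝ))) := by
  have hdu : 0 < G.degree u := (G.degree_pos_iff_exists_adj u).mpr ⟨v, h⟩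
  have hδ : 0 < (G.neighborFinset u).inf' hu (fun w => (G.degree w : ℝ)) := by
    refine (lt_inf'_iff _).mpr fun w hw => ?_
    exact_mod_cast (G.degree_pos_iff_exists_adj w).mpr ⟨u, ((G.mem_neighborFinset u w).mp hw).symm⟩
  refine one_div_le_one_div_of_le (by positivity) (Real.sqrt_le_sqrt ?_)
  exact mul_le_mul_of_nonneg_left (inf'_le _ ((G.mem_neighborFinset u v).mpr h)) (by positivity)

lemma card_filter_adj_not_adj_add_card_filter_adj_adj :
    #{v | G.Adj u v ∧ ¬Gp.Adj u v} + #{v | G.Adj u v ∧ Gp.Adj u v} = G.degree u := by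
  rw [← G.card_neighborFinset_eq_degree, G.neighborFinset_eq_filter, ← filter_filter,
    ← filter_filter, add_comm]
  exact card_filter_add_card_filter_not _

variable [DecidableEq V]

lemma normLap_apply_of_adj (h : G.Adj u v) :
    normLap G u v = -(1 / √((G.degree u : ℝ) * G.degree v)) := by
  simp [normLap, h.ne, h]

lemma normLap_apply_of_not_adj (hne : u ≠ v) (h : ¬G.Adj u v) : normLap G u v = 0 := by
  simp [normLap, hne, h]

lemma normLap_sub_apply_of_not_adj_of_not_adj (hG : ¬G.Adj u v) (hGp : ¬Gp.Adj u v) :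
    (normLap Gp - normLap G) u v = 0 := by
  by_cases huv : u = v <;> simp [normLap, huv, hG, hGp]

lemma abs_normLap_sub_apply_le_of_adj_of_not_adj (hu : (G.neighborFinset u).Nonempty)
    (hG : G.Adj u v) (hGp : ¬Gp.Adj u v) :
    |(normLap Gp - normLap G) u v| ≤
      1 / √((G.degree u : ℝ) * (G.neighborFinset u).inf' hu (fun w => (G.degree w : ℝ))) := by
  rw [Matrix.sub_apply, normLap_apply_of_not_adj hG.ne hGp, normLap_apply_of_adj hG, zero_sub,
    neg_neg, abs_of_nonneg (by positivity)]
  exact one_div_sqrt_degree_mul_le_of_adj hu hG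

lemma abs_degree_sub_le_alphaU_mul {w : V} (hw : w ∈ insert u (G.neighborFinset u))
    (hd : 0 < G.degree w) :
    |(Gp.degree w : ℝ) - G.degree w| ≤ alphaU G Gp u * G.degree w :=
  (div_le_iff₀ (by exact_mod_cast hd)).mp
    (le_sup' (fun v => |(Gp.degree v : ℝ) - (G.degree v : ℝ)| / (G.degree v : ℝ)) hw)

lemma abs_normLap_sub_apply_le_of_adj_of_adj (hu : (G.neighborFinset u).Nonempty)
    (hα : alphaU G Gp u ∈ Set.Ico (0 : ℝ) 1) (hG : G.Adj u v) (hGp : Gp.Adj u v) :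
    |(normLap Gp - normLap G) u v| ≤ alphaU G Gp u / (1 - alphaU G Gp u) *
      (1 / √((G.degree u : ℝ) * (G.neighborFinset u).inf' hu (fun w => (G.degree w : ℝ)))) := by
  obtain ⟨hα0, hα1⟩ := hα
  have hdu : 0 < G.degree u := (G.degree_pos_iff_exists_adj u).mpr ⟨v, hG⟩
  have hdv : 0 < G.degree v := (G.degree_pos_iff_exists_adj v).mpr ⟨u, hG.symm⟩
  have hsqrt := abs_sqrt_mul_sub_sqrt_mul_le hα0 hα1.le (Nat.cast_nonneg _) (Nat.cast_nonneg _)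
    (abs_degree_sub_le_alphaU_mul (mem_insert_self u _) hdu)
    (abs_degree_sub_le_alphaU_mul (mem_insert_of_mem ((G.mem_neighborFinset u v).mpr hG)) hdv)
  rw [Matrix.sub_apply, normLap_apply_of_adj hGp, normLap_apply_of_adj hG, neg_sub_neg]
  calc _ ≤ alphaU G Gp u / (1 - alphaU G Gp u) * (1 / √((G.degree u : ℝ) * G.degree v)) :=
        abs_one_div_sub_one_div_le (by positivity) hα0 hα1 hsqrt
    _ ≤ _ := mul_le_mul_of_nonneg_left (one_div_sqrt_degree_mul_le_of_adj hu hG)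
        (div_nonneg hα0 (by linarith))

end Graph

/-- Bound on the ℓ1 norm of row `u` of the error matrix `E = L_p - L`:
`‖E_u‖₁ ≤ Δ_u⁻/√(d_u δ_u) + Δ_u⁺/√(d_u' δ_u') + (α_u/(1-α_u)) (d_u - Δ_u⁻)/√(d_u δ_u)`. -/
theorem row_l1_norm_error_matrix_bound {V : Type*} [Fintype V] [DecidableEq V]
    (G Gp : SimpleGraph V) [DecidableRel G.Adj] [DecidableRel Gp.Adj]
    (hG : ∀ v, (G.neighborFinset v).Nonempty)
    (hGp : ∀ v, (Gp.neighborFinset v).Nonempty)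
    (u : V) (hα : alphaU G Gp u ∈ Set.Ico (0 : ℝ) 1) :
    ∑ v, |(normLap Gp - normLap G) u v| ≤
      ((Finset.univ.filter (fun v => G.Adj u v ∧ ¬ Gp.Adj u v)).card : ℝ) /
          Real.sqrt ((G.degree u : ℝ) *
            (G.neighborFinset u).inf' (hG u) (fun v => (G.degree v : ℝ))) +
      ((Finset.univ.filter (fun v => Gp.Adj u v ∧ ¬ G.Adj u v)).card : ℝ) /
          Real.sqrt ((Gp.degree u : ℝ) *
            (Gp.neighborFinset u).inf' (hGp u) (fun v => (Gp.degree v : ℝ))) +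
      (alphaU G Gp u / (1 - alphaU G Gp u)) *
        (((G.degree u : ℝ) -
            ((Finset.univ.filter (fun v => G.Adj u v ∧ ¬ Gp.Adj u v)).card : ℝ)) /
          Real.sqrt ((G.degree u : ℝ) *
            (G.neighborFinset u).inf' (hG u) (fun v => (G.degree v : ℝ)))) := by
  set c := alphaU G Gp u / (1 - alphaU G Gp u)
  set X := √((G.degree u : ℝ) * (G.neighborFinset u).inf' (hG u) (fun v => (G.degree v : ℝ)))
  set X' := √((Gp.degree u : ℝ) * (Gp.neighborFinset u).inf' (hGp u) (fun v => (Gp.degree v : ℝ)))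
  set deleted := univ.filter (fun v => G.Adj u v ∧ ¬Gp.Adj u v)
  set added := univ.filter (fun v => Gp.Adj u v ∧ ¬G.Adj u v)
  set retained := univ.filter (fun v => G.Adj u v ∧ Gp.Adj u v)
  have hentry : ∀ v, |(normLap Gp - normLap G) u v| ≤ (if v ∈ deleted then 1 / X else 0) +
      (if v ∈ added then 1 / X' else 0) + (if v ∈ retained then c * (1 / X) else 0) := by
    intro v
    by_cases hGv : G.Adj u v <;> by_cases hGpv : Gp.Adj u v <;>
      simp only [deleted, added, retained, mem_filter, mem_univ, hGv, hGpv,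
        not_true, not_false_eq_true, and_true, and_false, if_true, if_false, zero_add, add_zero]
    · exact abs_normLap_sub_apply_le_of_adj_of_adj (hG u) hα hGv hGpv
    · exact abs_normLap_sub_apply_le_of_adj_of_not_adj (hG u) hGv hGpv
    · rw [Matrix.sub_apply, abs_sub_comm, ← Matrix.sub_apply]
      exact abs_normLap_sub_apply_le_of_adj_of_not_adj (hGp u) hGpv hGv
    · rw [normLap_sub_apply_of_not_adj_of_not_adj hGv hGpv, abs_zero]
  have hcard : (#retained : ℝ) = G.degree u - #deleted := by
    rw [← card_filter_adj_not_adj_add_card_filter_adj_adj (Gp := Gp)]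
    push_cast
    ring
  calc ∑ v, |(normLap Gp - normLap G) u v|
      ≤ ∑ v, ((if v ∈ deleted then 1 / X else 0) + (if v ∈ added then 1 / X' else 0) +
          (if v ∈ retained then c * (1 / X) else 0)) := sum_le_sum fun v _ => hentry v
    _ = #deleted * (1 / X) + #added * (1 / X') + #retained * (c * (1 / X)) := by
      simp only [sum_add_distrib, sum_ite_mem, univ_inter, sum_const, nsmul_eq_mul]
    _ = _ := by
      rw [hcard]
      ring
end

section
/- Let G and G_p be simple graphs on a common finite vertex set, neither having isolated vertices, with normalized Laplacians L and L_p and error matrix E = L_p − L. Assume α_u ∈ [0,1) for every vertex u. Then the ℓ2 operator norm of E satisfies ‖E‖₂ ≤ max_{u ∈ V} { Δ_u⁻/√(d_u δ_u) + Δ_u⁺/√(d_u' δ_u') + (α_u/(1−α_u)) · (d_u − Δ_u⁻)/√(d_u δ_u) }. -/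
open scoped Matrix.Norms.L2Operator

/-!
Since `E = L_p - L` is symmetric, the Schur test (Cauchy–Schwarz on each row) bounds `‖E‖₂` by the
largest absolute row sum, so it suffices to bound `∑_v |E_uv|` for each `u`. A deleted edge
contributes `1/√(d_u d_v) ≤ 1/√(d_u δ_u)` and an added one `1/√(d_u' d_v') ≤ 1/√(d_u' δ_u')`. On a
kept edge both degrees move by a factor within `[1 - α_u, 1 + α_u]`, hence so does `√(d_u d_v)`, and
`|1/√(d_u d_v) - 1/√(d_u' d_v')| ≤ α_u/(1 - α_u) · 1/√(d_u δ_u)`; there are `d_u - Δ_u⁻` such edges.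
-/

open Finset

namespace Matrix

variable {m n : Type*} [Fintype n]

theorem sq_mulVec_apply_le_sum_abs_mul (A : Matrix m n ℝ) (x : n → ℝ) (i : m) :
    (A *ᵥ x) i ^ 2 ≤ (∑ j, |A i j|) * ∑ j, |A i j| * x j ^ 2 :=
  sum_sq_le_sum_mul_sum_of_sq_le_mul _ (fun _ _ => abs_nonneg _) (fun _ _ => by positivity)
    fun j _ => by rw [mul_pow, ← sq_abs (A i j), sq, mul_assoc]

theorem sum_sq_mulVec_le [Fintype m] {A : Matrix m n ℝ} {r c : ℝ} (hr : 0 ≤ r)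
    (hrow : ∀ i, ∑ j, |A i j| ≤ r) (hcol : ∀ j, ∑ i, |A i j| ≤ c) (x : n → ℝ) :
    ∑ i, (A *ᵥ x) i ^ 2 ≤ r * c * ∑ j, x j ^ 2 :=
  calc ∑ i, (A *ᵥ x) i ^ 2 ≤ ∑ i, r * ∑ j, |A i j| * x j ^ 2 := by
        gcongr with i
        exact (sq_mulVec_apply_le_sum_abs_mul A x i).trans (by gcongr; exact hrow i)
    _ = r * ∑ j, (∑ i, |A i j|) * x j ^ 2 := by
        rw [← mul_sum, sum_comm]
        simp only [sum_mul]
    _ ≤ r * ∑ j, c * x j ^ 2 := by gcongr with j; exact hcol j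
    _ = r * c * ∑ j, x j ^ 2 := by rw [← mul_sum, mul_assoc]

theorem l2_opNorm_le_sqrt_mul_of_sum_abs_le [Fintype m] [DecidableEq n] {A : Matrix m n ℝ}
    {r c : ℝ} (hr : 0 ≤ r) (hrow : ∀ i, ∑ j, |A i j| ≤ r) (hcol : ∀ j, ∑ i, |A i j| ≤ c) :
    ‖A‖ ≤ √(r * c) := by
  rw [l2_opNorm_def]
  refine ContinuousLinearMap.opNorm_le_bound _ (Real.sqrt_nonneg _) fun x => ?_
  simp only [LinearEquiv.trans_apply, LinearMap.coe_toContinuousLinearMap',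
    EuclideanSpace.norm_eq, Real.norm_eq_abs, sq_abs]
  rw [← Real.sqrt_mul' _ (by positivity)]
  exact Real.sqrt_le_sqrt (sum_sq_mulVec_le hr hrow hcol x)

theorem IsSymm.l2_opNorm_le_of_sum_abs_le [DecidableEq n] [Nonempty n] {A : Matrix n n ℝ}
    (hA : A.IsSymm) {c : ℝ} (h : ∀ i, ∑ j, |A i j| ≤ c) : ‖A‖ ≤ c := by
  have hc : 0 ≤ c := (sum_nonneg fun _ _ => abs_nonneg _).trans (h (Classical.arbitrary n))
  have hcol : ∀ j, ∑ i, |A i j| ≤ c := fun j => by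
    simpa only [hA.apply] using h j
  simpa [Real.sqrt_mul_self hc] using l2_opNorm_le_sqrt_mul_of_sum_abs_le hc h hcol

end Matrix

theorem abs_inv_sub_inv_le_of_abs_sub_le {p q α : ℝ} (hp : 0 < p) (hα : α < 1)
    (hpq : |q - p| ≤ α * p) : |p⁻¹ - q⁻¹| ≤ α / (1 - α) * p⁻¹ := by
  have hα0 : 0 ≤ α := nonneg_of_mul_nonneg_left ((abs_nonneg _).trans hpq) hp
  have hq : (1 - α) * p ≤ q := by linarith [(abs_le.mp hpq).1]
  have hq0 : 0 < q := lt_of_lt_of_le (mul_pos (by linarith) hp) hq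
  calc |p⁻¹ - q⁻¹| = |q - p| / (p * q) := by
        rw [inv_sub_inv hp.ne' hq0.ne', abs_div, abs_of_pos (mul_pos hp hq0)]
    _ ≤ α * p / (p * q) := by gcongr
    _ = α / q := by field_simp
    _ ≤ α / ((1 - α) * p) := by gcongr
    _ = α / (1 - α) * p⁻¹ := by rw [← div_div, div_eq_mul_inv]

theorem abs_sqrt_mul_sub_sqrt_mul_le_s12 {x y x' y' α : ℝ} (hx : 0 ≤ x) (hy : 0 ≤ y)
    (hα0 : 0 ≤ α) (hα1 : α ≤ 1) (hxx' : |x' - x| ≤ α * x) (hyy' : |y' - y| ≤ α * y) :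
    |√(x' * y') - √(x * y)| ≤ α * √(x * y) := by
  have h1α : 0 ≤ 1 - α := by linarith
  have hx' : (1 - α) * x ≤ x' := by linarith [(abs_le.mp hxx').1]
  have hy' : (1 - α) * y ≤ y' := by linarith [(abs_le.mp hyy').1]
  have hx'0 : 0 ≤ x' := (mul_nonneg h1α hx).trans hx'
  have hy'0 : 0 ≤ y' := (mul_nonneg h1α hy).trans hy'
  have hlow : (1 - α) * √(x * y) ≤ √(x' * y') := by
    rw [Real.le_sqrt (by positivity) (mul_nonneg hx'0 hy'0), mul_pow, Real.sq_sqrt (by positivity)]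
    calc (1 - α) ^ 2 * (x * y) = ((1 - α) * x) * ((1 - α) * y) := by ring
      _ ≤ x' * y' := mul_le_mul hx' hy' (by positivity) hx'0
  have hup : √(x' * y') ≤ (1 + α) * √(x * y) := by
    rw [Real.sqrt_le_left (by positivity), mul_pow, Real.sq_sqrt (by positivity)]
    calc x' * y' ≤ ((1 + α) * x) * ((1 + α) * y) :=
          mul_le_mul (by linarith [(abs_le.mp hxx').2]) (by linarith [(abs_le.mp hyy').2])
            hy'0 (by positivity)
      _ = (1 + α) ^ 2 * (x * y) := by ring
  rw [abs_le]
  constructor <;> linarith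

namespace SimpleGraph

variable {V : Type*} [Fintype V] (G Gp : SimpleGraph V) [DecidableRel G.Adj]

theorem inv_sqrt_degree_mul_degree_le {u v : V} {δ : ℝ} (hδ : 0 < δ) (huv : G.Adj u v)
    (hδv : δ ≤ G.degree v) : (√((G.degree u : ℝ) * G.degree v))⁻¹ ≤ (√(G.degree u * δ))⁻¹ := by
  have : (0 : ℝ) < G.degree u := Nat.cast_pos.2 ((G.degree_pos_iff_exists_adj u).2 ⟨v, huv⟩)
  gcongr

theorem inf'_degree_pos {u : V} (h : (G.neighborFinset u).Nonempty) :
    0 < (G.neighborFinset u).inf' h fun v => (G.degree v : ℝ) :=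
  (lt_inf'_iff _).2 fun v hv =>
    Nat.cast_pos.2 ((G.degree_pos_iff_exists_adj v).2 ⟨u, ((G.mem_neighborFinset u v).1 hv).symm⟩)

variable [DecidableRel Gp.Adj]

theorem card_filter_adj_and_adj_add_card_filter_adj_and_not_adj (u : V) :
    #{v | G.Adj u v ∧ Gp.Adj u v} + #{v | G.Adj u v ∧ ¬Gp.Adj u v} = G.degree u := by
  rw [← filter_filter, ← filter_filter, card_filter_add_card_filter_not,
    ← neighborFinset_eq_filter, card_neighborFinset_eq_degree]

variable [DecidableEq V]

theorem normLap_apply_of_ne {u v : V} (h : u ≠ v) :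
    normLap G u v = if G.Adj u v then -(√((G.degree u : ℝ) * G.degree v))⁻¹ else 0 := by
  simp [normLap, h]

theorem normLap_isSymm : (normLap G).IsSymm :=
  Matrix.IsSymm.ext fun u v => by
    simp only [normLap, eq_comm, G.adj_comm, mul_comm]

theorem abs_sub_normLap_apply_le {u : V} {δ δ' α : ℝ} (hδ : 0 < δ)
    (hδG : ∀ v, G.Adj u v → δ ≤ G.degree v) (hδ' : 0 < δ')
    (hδGp : ∀ v, Gp.Adj u v → δ' ≤ Gp.degree v) (hα : α < 1)
    (hαG : ∀ v ∈ insert u (G.neighborFinset u),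
      |(Gp.degree v : ℝ) - G.degree v| / G.degree v ≤ α) (v : V) :
    |(normLap Gp - normLap G) u v| ≤
      (if G.Adj u v ∧ ¬Gp.Adj u v then (√(G.degree u * δ))⁻¹ else 0) +
      (if Gp.Adj u v ∧ ¬G.Adj u v then (√(Gp.degree u * δ'))⁻¹ else 0) +
      (if G.Adj u v ∧ Gp.Adj u v then α / (1 - α) * (√(G.degree u * δ))⁻¹ else 0) := by
  rcases eq_or_ne u v with rfl | huv
  · simp [normLap]
  simp only [Matrix.sub_apply, normLap_apply_of_ne _ huv]
  by_cases hG : G.Adj u v <;> by_cases hGp : Gp.Adj u v <;>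
    simp only [hG, hGp, not_true_eq_false, not_false_eq_true, and_self, and_true, and_false,
      if_true, if_false, add_zero, zero_add, sub_zero, zero_sub, sub_self, neg_neg, abs_neg,
      abs_zero, le_refl, neg_sub_neg]
  · have hdu : (0 : ℝ) < G.degree u := Nat.cast_pos.2 ((G.degree_pos_iff_exists_adj u).2 ⟨v, hG⟩)
    have hdv : (0 : ℝ) < G.degree v :=
      Nat.cast_pos.2 ((G.degree_pos_iff_exists_adj v).2 ⟨u, hG.symm⟩)
    have hu := (div_le_iff₀ hdu).1 (hαG u (mem_insert_self _ _))
    have hv := (div_le_iff₀ hdv).1 (hαG v (mem_insert_of_mem ((G.mem_neighborFinset u v).2 hG)))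
    have hα0 : 0 ≤ α := nonneg_of_mul_nonneg_left ((abs_nonneg _).trans hu) hdu
    calc |(√((G.degree u : ℝ) * G.degree v))⁻¹ - (√((Gp.degree u : ℝ) * Gp.degree v))⁻¹|
        ≤ α / (1 - α) * (√((G.degree u : ℝ) * G.degree v))⁻¹ :=
          abs_inv_sub_inv_le_of_abs_sub_le (by positivity) hα
            (abs_sqrt_mul_sub_sqrt_mul_le_s12 hdu.le hdv.le hα0 hα.le hu hv)
      _ ≤ α / (1 - α) * (√(G.degree u * δ))⁻¹ := by
          have : 0 < 1 - α := by linarith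
          gcongr
          exact hδG v hG
  · rw [abs_of_nonneg (by positivity)]
    exact G.inv_sqrt_degree_mul_degree_le hδ hG (hδG v hG)
  · rw [abs_of_nonneg (by positivity)]
    exact Gp.inv_sqrt_degree_mul_degree_le hδ' hGp (hδGp v hGp)

theorem sum_abs_sub_normLap_apply_le {u : V} {δ δ' α : ℝ} (hδ : 0 < δ)
    (hδG : ∀ v, G.Adj u v → δ ≤ G.degree v) (hδ' : 0 < δ')
    (hδGp : ∀ v, Gp.Adj u v → δ' ≤ Gp.degree v) (hα : α < 1)
    (hαG : ∀ v ∈ insert u (G.neighborFinset u),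
      |(Gp.degree v : ℝ) - G.degree v| / G.degree v ≤ α) :
    ∑ v, |(normLap Gp - normLap G) u v| ≤
      (#{v | G.Adj u v ∧ ¬Gp.Adj u v} : ℝ) / √(G.degree u * δ) +
      (#{v | Gp.Adj u v ∧ ¬G.Adj u v} : ℝ) / √(Gp.degree u * δ') +
      α / (1 - α) * ((G.degree u - #{v | G.Adj u v ∧ ¬Gp.Adj u v}) / √(G.degree u * δ)) := by
  have hcard : (#{v | G.Adj u v ∧ Gp.Adj u v} : ℝ) + #{v | G.Adj u v ∧ ¬Gp.Adj u v} =
      G.degree u := mod_cast card_filter_adj_and_adj_add_card_filter_adj_and_not_adj G Gp u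
  calc ∑ v, |(normLap Gp - normLap G) u v|
      ≤ ∑ v, ((if G.Adj u v ∧ ¬Gp.Adj u v then (√(G.degree u * δ))⁻¹ else 0) +
          (if Gp.Adj u v ∧ ¬G.Adj u v then (√(Gp.degree u * δ'))⁻¹ else 0) +
          (if G.Adj u v ∧ Gp.Adj u v then α / (1 - α) * (√(G.degree u * δ))⁻¹ else 0)) :=
        sum_le_sum fun v _ => abs_sub_normLap_apply_le G Gp hδ hδG hδ' hδGp hα hαG v
    _ = _ := by
        simp only [sum_add_distrib, ← sum_filter, sum_const, nsmul_eq_mul, ← hcard]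
        ring

end SimpleGraph

theorem abs_degree_sub_div_degree_le_alphaU {V : Type*} [Fintype V] [DecidableEq V]
    (G Gp : SimpleGraph V) [DecidableRel G.Adj] [DecidableRel Gp.Adj] {u v : V}
    (hv : v ∈ insert u (G.neighborFinset u)) :
    |(Gp.degree v : ℝ) - G.degree v| / G.degree v ≤ alphaU G Gp u :=
  le_sup' (fun w => |(Gp.degree w : ℝ) - G.degree w| / G.degree w) hv

/-- **Theorem 1** of the paper: if `α_u ∈ [0,1)` for all vertices `u`, then
`‖E‖₂ ≤ max_u { Δ_u⁻/√(d_u δ_u) + Δ_u⁺/√(d_u' δ_u')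
  + (α_u/(1-α_u)) (d_u - Δ_u⁻)/√(d_u δ_u) }`. -/
theorem error_matrix_l2_opNorm_bound {V : Type*} [Fintype V] [DecidableEq V] [Nonempty V]
    (G Gp : SimpleGraph V) [DecidableRel G.Adj] [DecidableRel Gp.Adj]
    (hG : ∀ v, (G.neighborFinset v).Nonempty)
    (hGp : ∀ v, (Gp.neighborFinset v).Nonempty)
    (hα : ∀ u, alphaU G Gp u ∈ Set.Ico (0 : ℝ) 1) :
    ‖normLap Gp - normLap G‖ ≤
      Finset.univ.sup' Finset.univ_nonempty (fun u =>
        ((Finset.univ.filter (fun v => G.Adj u v ∧ ¬ Gp.Adj u v)).card : ℝ) /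
            Real.sqrt ((G.degree u : ℝ) *
              (G.neighborFinset u).inf' (hG u) (fun v => (G.degree v : ℝ))) +
        ((Finset.univ.filter (fun v => Gp.Adj u v ∧ ¬ G.Adj u v)).card : ℝ) /
            Real.sqrt ((Gp.degree u : ℝ) *
              (Gp.neighborFinset u).inf' (hGp u) (fun v => (Gp.degree v : ℝ))) +
        (alphaU G Gp u / (1 - alphaU G Gp u)) *
          (((G.degree u : ℝ) -
              ((Finset.univ.filter (fun v => G.Adj u v ∧ ¬ Gp.Adj u v)).card : ℝ)) /
            Real.sqrt ((G.degree u : ℝ) *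
              (G.neighborFinset u).inf' (hG u) (fun v => (G.degree v : ℝ))))) := by
  refine (Gp.normLap_isSymm.sub G.normLap_isSymm).l2_opNorm_le_of_sum_abs_le
    fun u => le_trans ?_ (le_sup' _ (mem_univ u))
  exact G.sum_abs_sub_normLap_apply_le Gp (G.inf'_degree_pos (hG u))
    (fun v h => inf'_le _ ((G.mem_neighborFinset u v).2 h)) (Gp.inf'_degree_pos (hGp u))
    (fun v h => inf'_le _ ((Gp.mem_neighborFinset u v).2 h)) (hα u).2
    fun _ => abs_degree_sub_div_degree_le_alphaU G Gp
end

section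
/- Let G and G_p be simple graphs on a common finite vertex set, neither having isolated vertices, with normalized Laplacians L and L_p. Let α > 0 and assume α_u ∈ [0,1) for every vertex u. Then for every nonzero real vector x, ‖(I + αL)^{-1} x − (I + αL_p)^{-1} x‖₂ / ‖x‖₂ ≤ α · max_{u ∈ V} { Δ_u⁻/√(d_u δ_u) + Δ_u⁺/√(d_u' δ_u') + (α_u/(1−α_u)) · (d_u − Δ_u⁻)/√(d_u δ_u) }. -/
open scoped Matrix

/-- The Euclidean (ℓ2) norm of a vector indexed by `V`. -/
noncomputable def l2norm {V : Type*} [Fintype V] (x : V → ℝ) : ℝ :=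
  Real.sqrt (∑ v, x v ^ 2)

open Finset Matrix

/-! With `A = I + αL` and `B = I + αL_p` we have `A⁻¹ - B⁻¹ = α A⁻¹ (L_p - L) B⁻¹`, and
both inverses are contractions since `L` and `L_p` are positive semidefinite. The symmetric
matrix `L_p - L` is bounded in operator norm by its largest absolute row sum (Schur test).
In row `u`, each deleted or added edge contributes at most `1/√(d_u δ_u)` (resp.
`1/√(d_u' δ_u')`), and on a surviving edge `uv` both degrees change by a relative amount at
most `α_u`, so `√(d_u d_v)` does too, and the entry `-1/√(d_u d_v)` changes by at most
`α_u/(1-α_u) · 1/√(d_u d_v)`. -/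

lemma abs_sqrt_mul_sub_sqrt_mul_le_s14 {x y x' y' a : ℝ} (hx : 0 ≤ x) (hy : 0 ≤ y)
    (ha₀ : 0 ≤ a) (ha₁ : a ≤ 1) (hx' : |x' - x| ≤ a * x) (hy' : |y' - y| ≤ a * y) :
    |√(x' * y') - √(x * y)| ≤ a * √(x * y) := by
  obtain ⟨hx'₁, hx'₂⟩ := abs_sub_le_iff.1 hx'
  obtain ⟨hy'₁, hy'₂⟩ := abs_sub_le_iff.1 hy'
  have hxy : √(x * y) ^ 2 = x * y := Real.sq_sqrt (by positivity)
  have hx'₀ : 0 ≤ x' := by nlinarith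
  have hy'₀ : 0 ≤ y' := by nlinarith
  have hlow : (1 - a) * √(x * y) ≤ √(x' * y') := by
    rw [Real.le_sqrt (by nlinarith [Real.sqrt_nonneg (x * y)]) (by nlinarith), mul_pow, hxy]
    nlinarith [mul_le_mul (by linarith : (1 - a) * x ≤ x') (by linarith : (1 - a) * y ≤ y')
      (by nlinarith) (by linarith)]
  have hhigh : √(x' * y') ≤ (1 + a) * √(x * y) := by
    rw [Real.sqrt_le_left (by positivity), mul_pow, hxy]
    nlinarith [mul_le_mul (by linarith : x' ≤ (1 + a) * x) (by linarith : y' ≤ (1 + a) * y)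
      (by linarith) (by positivity)]
  rw [abs_sub_le_iff]
  constructor <;> linarith

lemma abs_inv_sub_inv_le {s t a : ℝ} (hs : 0 < s) (ha : a < 1) (h : |t - s| ≤ a * s) :
    |t⁻¹ - s⁻¹| ≤ a / (1 - a) * s⁻¹ := by
  obtain ⟨h₁, h₂⟩ := abs_sub_le_iff.1 h
  have ht : (1 - a) * s ≤ t := by linarith
  have ht₀ : 0 < t := lt_of_lt_of_le (by nlinarith) ht
  have ha₀ : 0 ≤ a := nonneg_of_mul_nonneg_left ((abs_nonneg _).trans h) hs
  rw [inv_sub_inv ht₀.ne' hs.ne', abs_div, abs_of_pos (mul_pos ht₀ hs), abs_sub_comm]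
  calc |t - s| / (t * s) ≤ a * s / ((1 - a) * s * s) :=
        div_le_div₀ (by positivity) h (mul_pos (mul_pos (sub_pos.2 ha) hs) hs) (by nlinarith)
    _ = a / (1 - a) * s⁻¹ := by field_simp

section EuclideanNorm

variable {V : Type*} [Fintype V]

lemma l2norm_nonneg (x : V → ℝ) : 0 ≤ l2norm x := Real.sqrt_nonneg _

lemma l2norm_sq (x : V → ℝ) : l2norm x ^ 2 = ∑ v, x v ^ 2 :=
  Real.sq_sqrt (sum_nonneg fun _ _ => sq_nonneg _)

lemma l2norm_smul {a : ℝ} (ha : 0 ≤ a) (x : V → ℝ) : l2norm (a • x) = a * l2norm x := by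
  simp only [l2norm, Pi.smul_apply, smul_eq_mul, mul_pow, ← mul_sum]
  rw [Real.sqrt_mul (sq_nonneg a), Real.sqrt_sq ha]

lemma isUnit_of_posSemidef_sub_one [DecidableEq V] {A : Matrix V V ℝ} (hA : (A - 1).PosSemidef) :
    IsUnit A := by
  simpa using (PosDef.one.add_posSemidef hA).isUnit

lemma l2norm_inv_mulVec_le [DecidableEq V] {A : Matrix V V ℝ} (hA : (A - 1).PosSemidef)
    (x : V → ℝ) : l2norm (A⁻¹ *ᵥ x) ≤ l2norm x := by
  have hunit := isUnit_of_posSemidef_sub_one hA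
  set y := A⁻¹ *ᵥ x
  have hAy : A *ᵥ y = x := by
    rw [mulVec_mulVec, mul_nonsing_inv _ ((isUnit_iff_isUnit_det A).1 hunit), one_mulVec]
  have : l2norm y ^ 2 ≤ l2norm y * l2norm x :=
    calc l2norm y ^ 2 = y ⬝ᵥ y := by rw [l2norm_sq]; simp only [dotProduct, sq]
      _ ≤ y ⬝ᵥ y + y ⬝ᵥ ((A - 1) *ᵥ y) :=
        le_add_of_nonneg_right (by simpa using hA.dotProduct_mulVec_nonneg y)
      _ = ∑ v, y v * x v := by
        rw [sub_mulVec, hAy, one_mulVec, dotProduct_sub, add_sub_cancel, dotProduct]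
      _ ≤ l2norm y * l2norm x := Real.sum_mul_le_sqrt_mul_sqrt _ _ _
  nlinarith [l2norm_nonneg y, l2norm_nonneg x]

lemma l2norm_inv_mulVec_sub_inv_mulVec_le [DecidableEq V] {A B : Matrix V V ℝ}
    (hA : (A - 1).PosSemidef) (hB : (B - 1).PosSemidef) (x : V → ℝ) :
    l2norm (A⁻¹ *ᵥ x - B⁻¹ *ᵥ x) ≤ l2norm ((B - A) *ᵥ (B⁻¹ *ᵥ x)) := by
  rw [← sub_mulVec, Matrix.inv_sub_inv (iff_of_true (isUnit_of_posSemidef_sub_one hA)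
    (isUnit_of_posSemidef_sub_one hB)), ← mulVec_mulVec, ← mulVec_mulVec]
  exact l2norm_inv_mulVec_le hA _

lemma l2norm_mulVec_le_of_sum_abs_le {E : Matrix V V ℝ} {M : ℝ} (hM : 0 ≤ M)
    (hrow : ∀ u, ∑ v, |E u v| ≤ M) (hcol : ∀ v, ∑ u, |E u v| ≤ M) (w : V → ℝ) :
    l2norm (E *ᵥ w) ≤ M * l2norm w := by
  have hentry (u : V) : (E *ᵥ w) u ^ 2 ≤ M * ∑ v, |E u v| * w v ^ 2 :=
    calc (E *ᵥ w) u ^ 2 ≤ (∑ v, |E u v|) * ∑ v, |E u v| * w v ^ 2 :=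
          sum_sq_le_sum_mul_sum_of_sq_le_mul _ (fun _ _ => abs_nonneg _)
            (fun _ _ => by positivity)
            (fun v _ => le_of_eq (by rw [mul_pow, ← sq_abs (E u v)]; ring))
      _ ≤ M * ∑ v, |E u v| * w v ^ 2 :=
          mul_le_mul_of_nonneg_right (hrow u) (sum_nonneg fun _ _ => by positivity)
  have : l2norm (E *ᵥ w) ^ 2 ≤ (M * l2norm w) ^ 2 := by
    rw [mul_pow, l2norm_sq, l2norm_sq]
    calc ∑ u, (E *ᵥ w) u ^ 2 ≤ ∑ u, M * ∑ v, |E u v| * w v ^ 2 :=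
          sum_le_sum fun u _ => hentry u
      _ = M * ∑ v, (∑ u, |E u v|) * w v ^ 2 := by rw [← mul_sum, sum_comm]; simp_rw [sum_mul]
      _ ≤ M * ∑ v, M * w v ^ 2 := by gcongr with v; exact hcol v
      _ = M ^ 2 * ∑ v, w v ^ 2 := by rw [← mul_sum]; ring
  exact (pow_le_pow_iff_left₀ (l2norm_nonneg _) (mul_nonneg hM (l2norm_nonneg w))
    two_ne_zero).1 this

end EuclideanNorm

namespace SimpleGraph

variable {V : Type*} [Fintype V] {G Gp : SimpleGraph V} [DecidableRel G.Adj] [DecidableRel Gp.Adj]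

variable (G) in
noncomputable def minNeighborDegree (u : V) (hu : (G.neighborFinset u).Nonempty) : ℝ :=
  (G.neighborFinset u).inf' hu fun v => (G.degree v : ℝ)

variable (G Gp) in
/-- `G.lostNeighbors Gp u` are the endpoints of edges at `u` deleted in passing from `G` to `Gp`;
`Gp.lostNeighbors G u` are those of the added ones. -/
def lostNeighbors (u : V) : Finset V := {v | G.Adj u v ∧ ¬ Gp.Adj u v}

lemma cast_degree_pos {u : V} (hu : (G.neighborFinset u).Nonempty) : (0 : ℝ) < G.degree u := by
  rw [← card_neighborFinset_eq_degree]
  exact_mod_cast hu.card_pos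

lemma one_div_sqrt_degree_mul_le (hG : ∀ v, (G.neighborFinset v).Nonempty) {u v : V}
    (h : G.Adj u v) :
    1 / √((G.degree u : ℝ) * G.degree v) ≤
      1 / √((G.degree u : ℝ) * G.minNeighborDegree u (hG u)) := by
  have hu := cast_degree_pos (hG u)
  have hδ : 0 < G.minNeighborDegree u (hG u) :=
    (lt_inf'_iff _).2 fun w _ => cast_degree_pos (hG w)
  exact one_div_le_one_div_of_le (by positivity) (Real.sqrt_le_sqrt
    (mul_le_mul_of_nonneg_left (inf'_le _ ((G.mem_neighborFinset u v).2 h)) hu.le))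

variable (G Gp) in
lemma card_lostNeighbors_add_card_common (u : V) :
    #(G.lostNeighbors Gp u) + #{v | G.Adj u v ∧ Gp.Adj u v} = G.degree u := by
  rw [← card_neighborFinset_eq_degree,
    ← card_filter_add_card_filter_not (s := G.neighborFinset u) (Gp.Adj u), add_comm]
  congr 2 <;> ext v <;> simp [lostNeighbors]

variable [DecidableEq V]

variable (G Gp) in
noncomputable def normLapSubRowBound (hG : ∀ v, (G.neighborFinset v).Nonempty)
    (hGp : ∀ v, (Gp.neighborFinset v).Nonempty) (u : V) : ℝ :=
  (#(G.lostNeighbors Gp u) : ℝ) / √((G.degree u : ℝ) * G.minNeighborDegree u (hG u)) +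
  (#(Gp.lostNeighbors G u) : ℝ) / √((Gp.degree u : ℝ) * Gp.minNeighborDegree u (hGp u)) +
  alphaU G Gp u / (1 - alphaU G Gp u) *
    (((G.degree u : ℝ) - (#(G.lostNeighbors Gp u) : ℝ)) /
      √((G.degree u : ℝ) * G.minNeighborDegree u (hG u)))

lemma normLap_eq_diagonal_mul_lapMatrix_mul_diagonal
    (hG : ∀ v, (G.neighborFinset v).Nonempty) :
    normLap G = diagonal (fun v => (√(G.degree v : ℝ))⁻¹) * G.lapMatrix ℝ *
      diagonal (fun v => (√(G.degree v : ℝ))⁻¹) := by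
  ext u v
  have hu := cast_degree_pos (hG u)
  rw [mul_diagonal, diagonal_mul, lapMatrix, degMatrix, Matrix.sub_apply, adjMatrix_apply,
    normLap]
  by_cases huv : u = v
  · subst huv
    simp only [diagonal_apply_eq, G.irrefl, if_false, if_true, sub_zero]
    rw [mul_comm, ← mul_assoc, ← mul_inv, Real.mul_self_sqrt hu.le, inv_mul_cancel₀ hu.ne']
  · by_cases hadj : G.Adj u v
    · simp [huv, hadj, Real.sqrt_mul hu.le, mul_comm]
    · simp [huv, hadj]

lemma normLap_posSemidef (hG : ∀ v, (G.neighborFinset v).Nonempty) : (normLap G).PosSemidef := by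
  simpa [normLap_eq_diagonal_mul_lapMatrix_mul_diagonal hG] using
    (G.posSemidef_lapMatrix ℝ).mul_mul_conjTranspose_same
      (diagonal fun v => (√(G.degree v : ℝ))⁻¹)

lemma posSemidef_one_add_smul_normLap_sub_one (hG : ∀ v, (G.neighborFinset v).Nonempty)
    {α : ℝ} (hα : 0 ≤ α) : (1 + α • normLap G - 1).PosSemidef := by
  rw [add_sub_cancel_left]
  exact (normLap_posSemidef hG).smul hα

lemma normLap_apply_of_adj {u v : V} (h : G.Adj u v) :
    normLap G u v = -(1 / √((G.degree u : ℝ) * G.degree v)) := by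
  simp [normLap, h.ne, h]

lemma normLap_apply_of_ne_of_not_adj {u v : V} (huv : u ≠ v) (h : ¬G.Adj u v) :
    normLap G u v = 0 := by
  simp [normLap, huv, h]

lemma normLap_sub_apply_of_not_adj {u v : V} (h : ¬G.Adj u v) (h' : ¬Gp.Adj u v) :
    (normLap Gp - normLap G) u v = 0 := by
  by_cases huv : u = v <;> simp [normLap, huv, h, h']

lemma abs_degree_sub_le_alphaU (hG : ∀ v, (G.neighborFinset v).Nonempty) {u w : V}
    (hw : w = u ∨ G.Adj u w) :
    |(Gp.degree w : ℝ) - G.degree w| ≤ alphaU G Gp u * G.degree w := by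
  rw [← div_le_iff₀ (cast_degree_pos (hG w))]
  exact le_sup' (fun v => |(Gp.degree v : ℝ) - G.degree v| / G.degree v)
    (mem_insert.2 (hw.imp id (G.mem_neighborFinset u w).2))

lemma abs_normLap_sub_apply_le_of_adj_of_adj (hG : ∀ v, (G.neighborFinset v).Nonempty)
    {u v : V} (hα : alphaU G Gp u ∈ Set.Ico 0 1) (h : G.Adj u v) (h' : Gp.Adj u v) :
    |(normLap Gp - normLap G) u v| ≤ alphaU G Gp u / (1 - alphaU G Gp u) *
      (1 / √((G.degree u : ℝ) * G.minNeighborDegree u (hG u))) := by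
  have hsqrt := abs_sqrt_mul_sub_sqrt_mul_le_s14 (Nat.cast_nonneg _) (Nat.cast_nonneg _) hα.1 hα.2.le
    (abs_degree_sub_le_alphaU hG (Or.inl rfl)) (abs_degree_sub_le_alphaU hG (Or.inr h))
  have hpos : 0 < √((G.degree u : ℝ) * G.degree v) :=
    Real.sqrt_pos.2 (mul_pos (cast_degree_pos (hG u)) (cast_degree_pos (hG v)))
  rw [Matrix.sub_apply, normLap_apply_of_adj h', normLap_apply_of_adj h, neg_sub_neg,
    abs_sub_comm, one_div, one_div]
  calc _ ≤ alphaU G Gp u / (1 - alphaU G Gp u) * (√((G.degree u : ℝ) * G.degree v))⁻¹ :=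
        abs_inv_sub_inv_le hpos hα.2 hsqrt
    _ ≤ _ := by
        rw [← one_div]
        exact mul_le_mul_of_nonneg_left (one_div_sqrt_degree_mul_le hG h)
          (div_nonneg hα.1 (sub_nonneg.2 hα.2.le))

lemma sum_abs_normLap_sub_apply_le (hG : ∀ v, (G.neighborFinset v).Nonempty)
    (hGp : ∀ v, (Gp.neighborFinset v).Nonempty) {u : V} (hα : alphaU G Gp u ∈ Set.Ico 0 1) :
    ∑ v, |(normLap Gp - normLap G) u v| ≤ normLapSubRowBound G Gp hG hGp u := by
  set c₁ := 1 / √((G.degree u : ℝ) * G.minNeighborDegree u (hG u))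
  set c₂ := 1 / √((Gp.degree u : ℝ) * Gp.minNeighborDegree u (hGp u))
  set c₃ := alphaU G Gp u / (1 - alphaU G Gp u) * c₁
  set common : Finset V := {v | G.Adj u v ∧ Gp.Adj u v}
  have hentry (v : V) : |(normLap Gp - normLap G) u v| ≤
      (if v ∈ G.lostNeighbors Gp u then c₁ else 0) +
        (if v ∈ Gp.lostNeighbors G u then c₂ else 0) + (if v ∈ common then c₃ else 0) := by
    by_cases h : G.Adj u v <;> by_cases h' : Gp.Adj u v
    all_goals simp only [lostNeighbors, common, mem_filter, mem_univ, h, h', not_true,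
      not_false_eq_true, and_true, and_false, if_true, if_false, add_zero, zero_add]
    · exact abs_normLap_sub_apply_le_of_adj_of_adj hG hα h h'
    · rw [Matrix.sub_apply, normLap_apply_of_ne_of_not_adj h.ne h', normLap_apply_of_adj h,
        zero_sub, neg_neg, abs_of_nonneg (by positivity)]
      exact one_div_sqrt_degree_mul_le hG h
    · rw [Matrix.sub_apply, normLap_apply_of_ne_of_not_adj h'.ne h, normLap_apply_of_adj h',
        sub_zero, abs_neg, abs_of_nonneg (by positivity)]
      exact one_div_sqrt_degree_mul_le hGp h'
    · rw [normLap_sub_apply_of_not_adj h h', abs_zero]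
  have hcard : (#common : ℝ) = G.degree u - #(G.lostNeighbors Gp u) := by
    rw [← card_lostNeighbors_add_card_common G Gp u]
    push_cast
    ring
  calc ∑ v, |(normLap Gp - normLap G) u v|
      ≤ ∑ v, ((if v ∈ G.lostNeighbors Gp u then c₁ else 0) +
          (if v ∈ Gp.lostNeighbors G u then c₂ else 0) + (if v ∈ common then c₃ else 0)) :=
        sum_le_sum fun v _ => hentry v
    _ = #(G.lostNeighbors Gp u) * c₁ + #(Gp.lostNeighbors G u) * c₂ + #common * c₃ := by
        simp [sum_add_distrib, sum_ite_mem]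
    _ = normLapSubRowBound G Gp hG hGp u := by
        rw [normLapSubRowBound, hcard]
        ring

end SimpleGraph

theorem lowpass_relative_output_distance_bound_general {V : Type*} [Fintype V] [DecidableEq V]
    [Nonempty V]
    (G Gp : SimpleGraph V) [DecidableRel G.Adj] [DecidableRel Gp.Adj]
    (hG : ∀ v, (G.neighborFinset v).Nonempty)
    (hGp : ∀ v, (Gp.neighborFinset v).Nonempty)
    (α : ℝ) (hαpos : 0 < α)
    (hα : ∀ u, alphaU G Gp u ∈ Set.Ico (0 : ℝ) 1)
    (x : V → ℝ) :
    l2norm ((1 + α • normLap G)⁻¹ *ᵥ x - (1 + α • normLap Gp)⁻¹ *ᵥ x) / l2norm x ≤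
      α * Finset.univ.sup' Finset.univ_nonempty (fun u =>
        ((Finset.univ.filter (fun v => G.Adj u v ∧ ¬ Gp.Adj u v)).card : ℝ) /
            Real.sqrt ((G.degree u : ℝ) *
              (G.neighborFinset u).inf' (hG u) (fun v => (G.degree v : ℝ))) +
        ((Finset.univ.filter (fun v => Gp.Adj u v ∧ ¬ G.Adj u v)).card : ℝ) /
            Real.sqrt ((Gp.degree u : ℝ) *
              (Gp.neighborFinset u).inf' (hGp u) (fun v => (Gp.degree v : ℝ))) +
        (alphaU G Gp u / (1 - alphaU G Gp u)) *
          (((G.degree u : ℝ) -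
              ((Finset.univ.filter (fun v => G.Adj u v ∧ ¬ Gp.Adj u v)).card : ℝ)) /
            Real.sqrt ((G.degree u : ℝ) *
              (G.neighborFinset u).inf' (hG u) (fun v => (G.degree v : ℝ))))) := by
  change _ ≤ α * univ.sup' univ_nonempty (G.normLapSubRowBound Gp hG hGp)
  set M := univ.sup' univ_nonempty (G.normLapSubRowBound Gp hG hGp)
  set E := normLap Gp - normLap G
  have hrow (u : V) : ∑ v, |E u v| ≤ M :=
    (SimpleGraph.sum_abs_normLap_sub_apply_le hG hGp (hα u)).trans (le_sup' _ (mem_univ u))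
  have hE : E.IsHermitian :=
    (SimpleGraph.normLap_posSemidef hGp).1.sub (SimpleGraph.normLap_posSemidef hG).1
  have hcol (v : V) : ∑ u, |E u v| ≤ M := by
    simpa only [← hE.apply v, star_trivial] using hrow v
  have hM : 0 ≤ M := (sum_nonneg fun _ _ => abs_nonneg _).trans (hrow (Classical.arbitrary V))
  have hdiff : (1 + α • normLap Gp) - (1 + α • normLap G) = α • E := by
    rw [add_sub_add_left_eq_sub, smul_sub]
  have hA := SimpleGraph.posSemidef_one_add_smul_normLap_sub_one hG hαpos.le
  have hB := SimpleGraph.posSemidef_one_add_smul_normLap_sub_one hGp hαpos.le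
  refine div_le_of_le_mul₀ (l2norm_nonneg x) (mul_nonneg hαpos.le hM) ?_
  calc _ ≤ l2norm ((α • E) *ᵥ ((1 + α • normLap Gp)⁻¹ *ᵥ x)) :=
        hdiff ▸ l2norm_inv_mulVec_sub_inv_mulVec_le hA hB x
    _ = α * l2norm (E *ᵥ ((1 + α • normLap Gp)⁻¹ *ᵥ x)) := by
        rw [smul_mulVec, l2norm_smul hαpos.le]
    _ ≤ α * (M * l2norm x) := by
        gcongr
        exact (l2norm_mulVec_le_of_sum_abs_le hM hrow hcol _).trans
          (mul_le_mul_of_nonneg_left (l2norm_inv_mulVec_le hB x) hM)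
    _ = α * M * l2norm x := (mul_assoc _ _ _).symm

/-- **Structurally interpretable bound on the relative output distance of the low-pass
filter `g(λ) = (1+αλ)⁻¹`**: for every nonzero signal `x`,
`‖(I+αL)⁻¹ x - (I+αL_p)⁻¹ x‖₂ / ‖x‖₂ ≤ α * max_u { Δ_u⁻/√(d_u δ_u) + Δ_u⁺/√(d_u' δ_u')
  + (α_u/(1-α_u)) (d_u - Δ_u⁻)/√(d_u δ_u) }`. -/
theorem lowpass_relative_output_distance_bound {V : Type*} [Fintype V] [DecidableEq V]
    [Nonempty V]
    (G Gp : SimpleGraph V) [DecidableRel G.Adj] [DecidableRel Gp.Adj]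
    (hG : ∀ v, (G.neighborFinset v).Nonempty)
    (hGp : ∀ v, (Gp.neighborFinset v).Nonempty)
    (α : ℝ) (hαpos : 0 < α)
    (hα : ∀ u, alphaU G Gp u ∈ Set.Ico (0 : ℝ) 1)
    (x : V → ℝ) (hx : x ≠ 0) :
    l2norm ((1 + α • normLap G)⁻¹ *ᵥ x - (1 + α • normLap Gp)⁻¹ *ᵥ x) / l2norm x ≤
      α * Finset.univ.sup' Finset.univ_nonempty (fun u =>
        ((Finset.univ.filter (fun v => G.Adj u v ∧ ¬ Gp.Adj u v)).card : ℝ) /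
            Real.sqrt ((G.degree u : ℝ) *
              (G.neighborFinset u).inf' (hG u) (fun v => (G.degree v : ℝ))) +
        ((Finset.univ.filter (fun v => Gp.Adj u v ∧ ¬ G.Adj u v)).card : ℝ) /
            Real.sqrt ((Gp.degree u : ℝ) *
              (Gp.neighborFinset u).inf' (hGp u) (fun v => (Gp.degree v : ℝ))) +
        (alphaU G Gp u / (1 - alphaU G Gp u)) *
          (((G.degree u : ℝ) -
              ((Finset.univ.filter (fun v => G.Adj u v ∧ ¬ Gp.Adj u v)).card : ℝ)) /
            Real.sqrt ((G.degree u : ℝ) *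
              (G.neighborFinset u).inf' (hG u) (fun v => (G.degree v : ℝ))))) :=
  lowpass_relative_output_distance_bound_general G Gp hG hGp α hαpos hα x
end
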